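/- For a complete graph K_n with sorted thresholds t(v_1) ≤ ... ≤ t(v_n), the optimal values satisfy the recurrence Opt_ℓ(m) = min over 1 ≤ j ≤ m of ( Opt_{ℓ-1}(j) + Σ_{i=j+1}^m max{0, t(v_i) − j} ), for all 1 ≤ m ≤ n and 1 ≤ ℓ ≤ λ. -/

import Mathlib

/-!
Upper bound: extend an optimal `(ℓ-1)`-round solution on the first `j` nodes by giving each
later node `i` the incentive `t i - j`; once the prefix is influenced, every later node fires in
round `ℓ`.

Lower bound: take an `ℓ`-round solution `p`, let `S` be the set influenced after `ℓ - 1` rounds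
and `j = |S|`. Every node outside `S` fires in round `ℓ` against only `j` influenced neighbours,
so it pays at least `t i - j`. Moving the `k`-th smallest element `e k` of `S` to position `k`
while keeping its deficiency `t (e k) - p (e k)` (capped at `t k`) gives an `(ℓ-1)`-round
solution on the prefix of length `j`, since the process only sees deficiencies. As `k ≤ e k`,
thresholds are sorted and deficiencies inside `S` are below `j`, the moved incentive together
with the change of the `t i - j` terms never exceeds the original incentive.
-/

open Finset

/-- Influence process on a complete graph with node set `{0,…,m-1}`, thresholds `t`,
incentives `p`: at round 0 exactly the nodes with `p v = t v` are influenced; afterwards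
a node is influenced once the number of already influenced other nodes reaches `t v - p v`. -/
def kInfl (m : ℕ) (t p : ℕ → ℕ) : ℕ → Finset ℕ
  | 0 => (range m).filter fun v => p v = t v
  | ℓ + 1 => kInfl m t p ℓ ∪ (range m).filter fun v =>
      t v - p v ≤ ((kInfl m t p ℓ).erase v).card

/-- `kOpt t ℓ m`: minimum total incentive influencing all of the complete graph on
`{0,…,m-1}` within `ℓ` rounds. -/
noncomputable def kOpt (t : ℕ → ℕ) (ℓ m : ℕ) : ℕ :=
  sInf {c : ℕ | ∃ p : ℕ → ℕ, (∀ v < m, p v ≤ t v) ∧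
    kInfl m t p ℓ = range m ∧ c = ∑ v ∈ range m, p v}

section Influence

variable {m : ℕ} {t p : ℕ → ℕ}

lemma kInfl_subset_range (m : ℕ) (t p : ℕ → ℕ) : ∀ r, kInfl m t p r ⊆ range m
  | 0 => filter_subset _ _
  | r + 1 => union_subset (kInfl_subset_range m t p r) (filter_subset _ _)

lemma kInfl_mono : Monotone (kInfl m t p) :=
  monotone_nat_of_le_succ fun _ => subset_union_left

lemma mem_kInfl_succ_of_sub_le {r v : ℕ} (hv : v < m)
    (h : t v - p v ≤ #((kInfl m t p r).erase v)) : v ∈ kInfl m t p (r + 1) :=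
  mem_union_right _ (mem_filter.2 ⟨mem_range.2 hv, h⟩)

lemma sub_le_card_erase_of_mem_kInfl :
    ∀ {r v : ℕ}, v ∈ kInfl m t p r → t v - p v ≤ #((kInfl m t p r).erase v)
  | 0, v, hv => by
    rw [kInfl, mem_filter] at hv
    omega
  | r + 1, v, hv => by
    have hmono : #((kInfl m t p r).erase v) ≤ #((kInfl m t p (r + 1)).erase v) :=
      card_le_card (erase_subset_erase _ (kInfl_mono r.le_succ))
    rcases mem_union.1 hv with hv | hv
    · exact (sub_le_card_erase_of_mem_kInfl hv).trans hmono
    · exact (mem_filter.1 hv).2.trans hmono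

lemma sub_le_card_of_mem_kInfl_succ {r v : ℕ} (hv : v ∈ kInfl m t p (r + 1))
    (hv' : v ∉ kInfl m t p r) : t v - p v ≤ #(kInfl m t p r) := by
  rcases mem_union.1 hv with hv | hv
  · exact absurd hv hv'
  · simpa only [erase_eq_of_notMem hv'] using (mem_filter.1 hv).2

lemma kInfl_self (m : ℕ) (t : ℕ → ℕ) : ∀ r, kInfl m t t r = range m
  | 0 => filter_true_of_mem fun _ _ => rfl
  | r + 1 => by
    rw [kInfl, kInfl_self m t r]
    exact union_eq_left.2 (filter_subset _ _)

lemma kInfl_nonempty_of_succ (hp : ∀ v < m, p v ≤ t v) {r : ℕ}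
    (h : (kInfl m t p (r + 1)).Nonempty) : (kInfl m t p r).Nonempty := by
  obtain ⟨v, hv⟩ := h
  by_contra hempty
  have hv' : v ∉ kInfl m t p r := fun h => hempty ⟨v, h⟩
  have hdef := sub_le_card_of_mem_kInfl_succ hv hv'
  rw [not_nonempty_iff_eq_empty.1 hempty, card_empty] at hdef
  have hvm : v < m := mem_range.1 (kInfl_subset_range m t p _ hv)
  have hv0 : v ∈ kInfl m t p 0 := mem_filter.2 ⟨mem_range.2 hvm, by have := hp v hvm; omega⟩
  exact hv' (kInfl_mono (Nat.zero_le r) hv0)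

lemma mem_kInfl_of_map {m' : ℕ} {q e : ℕ → ℕ} (he : Set.InjOn e (Set.Iio m'))
    (hq : ∀ k < m', q k ≤ t k) (hdef : ∀ k < m', e k < m → t k - q k ≤ t (e k) - p (e k)) :
    ∀ {r : ℕ}, kInfl m t p r ⊆ (range m').image e →
      ∀ k < m', e k ∈ kInfl m t p r → k ∈ kInfl m' t q r
  | 0, _, k, hk, hek => by
    rw [kInfl, mem_filter, mem_range] at hek
    have := hdef k hk hek.1
    exact mem_filter.2 ⟨mem_range.2 hk, by have := hq k hk; omega⟩
  | r + 1, hcov, k, hk, hek => by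
    have hcov' : kInfl m t p r ⊆ (range m').image e := (kInfl_mono r.le_succ).trans hcov
    have ih := mem_kInfl_of_map he hq hdef hcov'
    by_cases hekr : e k ∈ kInfl m t p r
    · exact kInfl_mono r.le_succ (ih k hk hekr)
    have hsub : kInfl m t p r ⊆ ((kInfl m' t q r).erase k).image e := by
      intro y hy
      obtain ⟨k', hk', rfl⟩ := mem_image.1 (hcov' hy)
      have hk'm := mem_range.1 hk'
      exact mem_image_of_mem _ (mem_erase.2 ⟨fun h => hekr (h ▸ hy), ih k' hk'm hy⟩)
    refine mem_kInfl_succ_of_sub_le hk ?_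
    calc t k - q k ≤ t (e k) - p (e k) :=
          hdef k hk (mem_range.1 (kInfl_subset_range m t p _ hek))
      _ ≤ #(kInfl m t p r) := sub_le_card_of_mem_kInfl_succ hek hekr
      _ ≤ #(((kInfl m' t q r).erase k).image e) := card_le_card hsub
      _ ≤ #((kInfl m' t q r).erase k) := card_image_le

end Influence

lemma exists_kOpt_eq (t : ℕ → ℕ) (ℓ m : ℕ) :
    ∃ p : ℕ → ℕ, (∀ v < m, p v ≤ t v) ∧ kInfl m t p ℓ = range m ∧
      kOpt t ℓ m = ∑ v ∈ range m, p v :=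
  Nat.sInf_mem (s := {c | ∃ p : ℕ → ℕ, (∀ v < m, p v ≤ t v) ∧
    kInfl m t p ℓ = range m ∧ c = ∑ v ∈ range m, p v})
    ⟨_, t, fun _ _ => le_rfl, kInfl_self m t ℓ, rfl⟩

lemma kOpt_le {t p : ℕ → ℕ} {ℓ m : ℕ} (hp : ∀ v < m, p v ≤ t v)
    (hfull : kInfl m t p ℓ = range m) : kOpt t ℓ m ≤ ∑ v ∈ range m, p v :=
  Nat.sInf_le ⟨p, hp, hfull, rfl⟩

lemma kOpt_succ_le {t : ℕ → ℕ} {ℓ m j : ℕ} (hjm : j ≤ m) :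
    kOpt t (ℓ + 1) m ≤ kOpt t ℓ j + ∑ i ∈ Ico j m, (t i - j) := by
  obtain ⟨q, hq, hqfull, hqcost⟩ := exists_kOpt_eq t ℓ j
  set p : ℕ → ℕ := fun x => if x < j then q x else t x - j with hp_def
  have hp : ∀ x < m, p x ≤ t x := fun x hx => by
    by_cases hxj : x < j
    · simpa only [hp_def, if_pos hxj] using hq x hxj
    · simp only [hp_def, if_neg hxj, Nat.sub_le]
  have hprefix : range j ⊆ kInfl m t p ℓ := fun k hk => by
    have hkj := mem_range.1 hk
    refine mem_kInfl_of_map (e := id) (Set.injOn_id _) hp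
      (fun k _ (hkj : k < j) => by simp only [hp_def, id, if_pos hkj, le_refl]) ?_ k
      (hkj.trans_le hjm) (hqfull ▸ hk)
    rw [image_id]
    exact (kInfl_subset_range j t q ℓ).trans (range_subset_range.2 hjm)
  have hfull : kInfl m t p (ℓ + 1) = range m := by
    refine (kInfl_subset_range m t p _).antisymm fun x hx => ?_
    by_cases hxj : x < j
    · exact kInfl_mono ℓ.le_succ (hprefix (mem_range.2 hxj))
    refine mem_kInfl_succ_of_sub_le (mem_range.1 hx) ?_
    calc t x - p x ≤ j := by simp only [hp_def, if_neg hxj]; omega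
      _ = #(range j) := (card_range j).symm
      _ ≤ _ := card_le_card (subset_erase.2 ⟨hprefix, fun h => hxj (mem_range.1 h)⟩)
  calc kOpt t (ℓ + 1) m ≤ ∑ x ∈ range m, p x := kOpt_le hp hfull
    _ = ∑ x ∈ range j, p x + ∑ i ∈ Ico j m, p i := (sum_range_add_sum_Ico p hjm).symm
    _ = kOpt t ℓ j + ∑ i ∈ Ico j m, (t i - j) := by
      rw [hqcost]
      congr 1
      · exact sum_congr rfl fun x hx => if_pos (mem_range.1 hx)
      · exact sum_congr rfl fun i hi => if_neg (mem_Ico.1 hi).1.not_gt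

lemma Finset.exists_strictMonoOn_image_range_card (S : Finset ℕ) :
    ∃ e : ℕ → ℕ, StrictMonoOn e (Set.Iio #S) ∧ (range #S).image e = S := by
  have hf : (Set.ofPred (· ∈ S)).Finite := S.finite_toSet
  have hcard : #hf.toFinset = #S := by congr 1; ext; simp [Set.ofPred]
  refine ⟨Nat.nth (· ∈ S), hcard ▸ Nat.nth_strictMonoOn hf, coe_injective ?_⟩
  rw [coe_image, coe_range, ← hcard, Nat.image_nth_Iio_card hf]
  rfl

/-- Node `k` keeps the deficiency of `e k`, capped at `t k`. -/
lemma kOpt_le_of_enum {t p e : ℕ → ℕ} {ℓ m j : ℕ} (he : Set.InjOn e (Set.Iio j))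
    (he_image : (range j).image e = kInfl m t p ℓ) :
    kOpt t ℓ j ≤ ∑ k ∈ range j, (t k - (t (e k) - p (e k))) := by
  refine kOpt_le (fun k _ => Nat.sub_le _ _) ((kInfl_subset_range _ _ _ _).antisymm fun k hk => ?_)
  have hk := mem_range.1 hk
  exact mem_kInfl_of_map he (fun k _ => Nat.sub_le _ _) (fun k _ _ => by omega) he_image.ge k hk
    (he_image ▸ mem_image_of_mem e (mem_range.2 hk))

lemma sum_range_add_sum_Ico_le_of_enum {S : Finset ℕ} {e q p f : ℕ → ℕ} {j m : ℕ}
    (hSm : S ⊆ range m) (hjm : j ≤ m) (he : Set.InjOn e ↑(range j))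
    (he_image : (range j).image e = S) (hnode : ∀ k ∈ range j, q k + f (e k) ≤ p (e k) + f k)
    (hout : ∀ x ∈ range m \ S, f x ≤ p x) :
    ∑ k ∈ range j, q k + ∑ i ∈ Ico j m, f i ≤ ∑ x ∈ range m, p x := by
  have hS : ∑ k ∈ range j, q k + ∑ x ∈ S, f x ≤ ∑ x ∈ S, p x + ∑ k ∈ range j, f k := by
    rw [← he_image, sum_image he, sum_image he, ← sum_add_distrib, ← sum_add_distrib]
    exact sum_le_sum hnode
  have hout_sum := sum_le_sum hout
  have hsplit_f := sum_sdiff hSm (f := f)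
  have hsplit_p := sum_sdiff hSm (f := p)
  have hIco := sum_range_add_sum_Ico f hjm
  omega

lemma exists_kOpt_add_le {t p : ℕ → ℕ} {ℓ m : ℕ} (hm : 1 ≤ m)
    (hmono : ∀ i j, i ≤ j → j < m → t i ≤ t j) (hp : ∀ v < m, p v ≤ t v)
    (hfull : kInfl m t p (ℓ + 1) = range m) :
    ∃ j ∈ Icc 1 m, kOpt t ℓ j + ∑ i ∈ Ico j m, (t i - j) ≤ ∑ v ∈ range m, p v := by
  set S := kInfl m t p ℓ
  set j := #S
  obtain ⟨e, he_mono, he_image⟩ := S.exists_strictMonoOn_image_range_card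
  have hSm : S ⊆ range m := kInfl_subset_range m t p ℓ
  have hjm : j ≤ m := by simpa only [card_range] using card_le_card hSm
  have hj : 1 ≤ j :=
    card_pos.2 (kInfl_nonempty_of_succ hp (hfull ▸ nonempty_range_iff.2 (by omega)))
  have he_mem : ∀ k < j, e k ∈ S := fun k hk => he_image ▸ mem_image_of_mem e (mem_range.2 hk)
  have hinside : ∀ x ∈ S, t x - p x < j := fun x hx => by
    have : t x - p x ≤ j - 1 := card_erase_of_mem hx ▸ sub_le_card_erase_of_mem_kInfl hx
    omega
  have houtside : ∀ x ∈ range m \ S, t x - j ≤ p x := fun x hx => by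
    have : t x - p x ≤ j :=
      sub_le_card_of_mem_kInfl_succ (hfull ▸ (mem_sdiff.1 hx).1) (mem_sdiff.1 hx).2
    omega
  have hnode : ∀ k ∈ range j,
      t k - (t (e k) - p (e k)) + (t (e k) - j) ≤ p (e k) + (t k - j) := fun k hk => by
    have hk := mem_range.1 hk
    have hke : k ≤ e k := (he_mono.mono (Set.Iic_subset_Iio.2 hk)).Iic_id_le k le_rfl
    have hekm := mem_range.1 (hSm (he_mem k hk))
    have ht := hmono k (e k) hke hekm
    have hdef := hinside _ (he_mem k hk)
    have hpe := hp (e k) hekm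
    omega
  have hinj : Set.InjOn e ↑(range j) := by simpa only [coe_range] using he_mono.injOn
  have hcost := sum_range_add_sum_Ico_le_of_enum hSm hjm hinj he_image hnode houtside
  have hq := kOpt_le_of_enum (j := j) he_mono.injOn he_image
  exact ⟨j, mem_Icc.2 ⟨hj, hjm⟩, by omega⟩

-- Node `v_i` of the paper is `i - 1` here, so the paper's `Σ_{i=j+1}^m max{0, t(v_i) − j}` is
-- `∑ i ∈ Ico j m, (t i - j)` with truncated subtraction.
theorem clique_opt_recurrence_general (n ℓ m : ℕ) (t : ℕ → ℕ)
    (hl1 : 1 ≤ ℓ) (hm1 : 1 ≤ m) (hmn : m ≤ n)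
    (hmono : ∀ i j, i ≤ j → j < n → t i ≤ t j) :
    kOpt t ℓ m =
      ((Icc 1 m).image fun j => kOpt t (ℓ - 1) j + ∑ i ∈ Ico j m, (t i - j)).min'
        ((Finset.nonempty_Icc.mpr hm1).image _) := by
  obtain ⟨ℓ, rfl⟩ : ∃ k, ℓ = k + 1 := ⟨ℓ - 1, by omega⟩
  apply le_antisymm
  · refine le_min' _ _ _ fun c hc => ?_
    obtain ⟨j, hj, rfl⟩ := mem_image.1 hc
    exact kOpt_succ_le (mem_Icc.1 hj).2
  · obtain ⟨p, hp, hfull, hcost⟩ := exists_kOpt_eq t (ℓ + 1) m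
    obtain ⟨j, hj, hle⟩ := exists_kOpt_add_le hm1
      (fun i j hij hj => hmono i j hij (hj.trans_le hmn)) hp hfull
    exact hcost ▸ (min'_le _ _ (mem_image_of_mem _ hj)).trans hle

/-- the recurrence
`Opt_ℓ(m) = min_{1 ≤ j ≤ m} (Opt_{ℓ-1}(j) + Σ_{i=j+1}^m max{0, t(v_i) - j})`
(in 0-based indexing, the sum is over `i ∈ [j, m)` with truncated subtraction). -/
theorem clique_opt_recurrence (n lam ℓ m : ℕ) (t : ℕ → ℕ)
    (hl1 : 1 ≤ ℓ) (hl2 : ℓ ≤ lam) (hm1 : 1 ≤ m) (hmn : m ≤ n)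
    (hmono : ∀ i j, i ≤ j → j < n → t i ≤ t j)
    (hbd : ∀ v < n, 1 ≤ t v ∧ t v ≤ n - 1) :
    kOpt t ℓ m =
      ((Icc 1 m).image fun j => kOpt t (ℓ - 1) j + ∑ i ∈ Ico j m, (t i - j)).min'
        ((Finset.nonempty_Icc.mpr hm1).image _) :=
  clique_opt_recurrence_general n ℓ m t hl1 hm1 hmn hmono
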